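/- Let (X,G) be a complete G-metric space with at least 3 elements, and let T : X → X be a mapping such that (I) for all x ∈ X, if Tx ≠ x then T(Tx) ≠ x, and (II) there exist nonnegative constants a₁, a₂, a₃, a₄ with 0 < a₁ + a₂ + a₃ + a₄ < 1 such that G(Tx,Ty,Tz) ≤ a₁·G(x,Tx,Tx) + a₂·G(y,Ty,Ty) + a₃·G(z,Tz,Tz) + a₄·G(x,y,z) for all pairwise distinct points x, y, z ∈ X. Then T has at least one fixed point, and T has at most two fixed points. -/

import Mathlib

/-!
Along an orbit `xₙ = Tⁿ x₀` containing no fixed point, condition (I) makes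
`xₙ, xₙ₊₁, xₙ₊₂` pairwise distinct, so the Reich inequality applies to them and shows that the
"perimeters" `G(xₙ, xₙ₊₁, xₙ₊₂)` decay geometrically with ratio `(a₁ + a₂ + a₄) / (1 - a₃)`.
Hence the orbit is `G`-Cauchy; it is also injective, the perimeters being strictly decreasing,
so it eventually avoids its limit `u`, and the Reich inequality for `xₙ, xₙ₊₁, u` forces
`G(u, Tu, Tu) = 0`.
Three distinct fixed points `x, y, z` would give `G(x, y, z) ≤ a₄ G(x, y, z)`.
-/

open Filter

/-- A G-metric on `X` in the sense of Mustafa and Sims: (P1) `G x y z = 0` iff `x = y = z`;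
(P2) `G x x y > 0` if `x ≠ y`; (P3) invariance under all permutations of the arguments
(generated by the two swaps below); (P4) `G x x y ≤ G x y z` if `y ≠ z`;
(P5) `G x y z ≤ G x w w + G w y z`. The codomain is `[0, ∞)`, encoded by `nonneg`. -/
structure IsGMetric {X : Type*} (G : X → X → X → ℝ) : Prop where
  nonneg : ∀ x y z, 0 ≤ G x y z
  eq_zero_iff : ∀ x y z, G x y z = 0 ↔ x = y ∧ y = z
  pos_of_ne : ∀ x y, x ≠ y → 0 < G x x y
  swap_left : ∀ x y z, G x y z = G y x z
  swap_right : ∀ x y z, G x y z = G x z y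
  le_of_ne : ∀ x y z, y ≠ z → G x x y ≤ G x y z
  triangle : ∀ x y z w, G x y z ≤ G x w w + G w y z

/-- A sequence `u` is `G`-Cauchy if `G (u n) (u m) (u m) → 0` as `n, m → ∞`. -/
def GCauchy {X : Type*} (G : X → X → X → ℝ) (u : ℕ → X) : Prop :=
  Tendsto (fun p : ℕ × ℕ => G (u p.1) (u p.2) (u p.2)) atTop (nhds 0)

/-- A sequence `u` is `G`-convergent to `x` if `G (u n) x x → 0` as `n → ∞`. -/
def GConvergent {X : Type*} (G : X → X → X → ℝ) (u : ℕ → X) (x : X) : Prop :=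
  Tendsto (fun n => G (u n) x x) atTop (nhds 0)

/-- `(X, G)` is complete if every `G`-Cauchy sequence is `G`-convergent to some point. -/
def GComplete {X : Type*} (G : X → X → X → ℝ) : Prop :=
  ∀ u : ℕ → X, GCauchy G u → ∃ x, GConvergent G u x

open Topology Function

namespace IsGMetric

variable {X : Type*} {G : X → X → X → ℝ}

theorem self_eq_zero (hG : IsGMetric G) (x : X) : G x x x = 0 :=
  (hG.eq_zero_iff x x x).2 ⟨rfl, rfl⟩

theorem rotate (hG : IsGMetric G) (x y z : X) : G x y z = G y z x := by
  rw [hG.swap_left, hG.swap_right]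

theorem le_two_mul (hG : IsGMetric G) (x y : X) : G x y y ≤ 2 * G y x x := by
  linarith [hG.triangle y y x x, hG.rotate x y y, hG.rotate y x x, hG.swap_right x y x]

theorem le_left (hG : IsGMetric G) {x y z : X} (h : x ≠ z) : G x y y ≤ G x y z := by
  rw [hG.rotate, hG.swap_left x]
  exact hG.le_of_ne y x z h

theorem le_right (hG : IsGMetric G) {x y z : X} (h : x ≠ y) : G y z z ≤ G x y z :=
  (hG.le_left h.symm).trans_eq (hG.rotate x y z).symm

theorem pos_of_ne_of_ne (hG : IsGMetric G) {x y z : X} (hxy : x ≠ y) (hyz : y ≠ z) :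
    0 < G x y z :=
  (hG.pos_of_ne x y hxy).trans_le (hG.le_of_ne x y z hyz)

theorem le_sum_Ico (hG : IsGMetric G) (u : ℕ → X) {m n : ℕ} (h : m ≤ n) :
    G (u m) (u n) (u n) ≤ ∑ i ∈ Finset.Ico m n, G (u i) (u (i + 1)) (u (i + 1)) := by
  induction n, h using Nat.le_induction with
  | base => simp [hG.self_eq_zero]
  | succ n hmn ih =>
    rw [Finset.sum_Ico_succ_top hmn]
    linarith [hG.triangle (u m) (u (n + 1)) (u (n + 1)) (u n)]

theorem gCauchy_of_le_geometric (hG : IsGMetric G) {u : ℕ → X} {C r : ℝ} (hr₀ : 0 ≤ r)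
    (hr₁ : r < 1) (hu : ∀ n, G (u n) (u (n + 1)) (u (n + 1)) ≤ C * r ^ n) : GCauchy G u := by
  have hC : 0 ≤ C := by simpa using (hG.nonneg _ _ _).trans (hu 0)
  have hC' : 0 ≤ C / (1 - r) := div_nonneg hC (sub_nonneg.2 hr₁.le)
  have hle : ∀ m n, m ≤ n → G (u m) (u n) (u n) ≤ C / (1 - r) * r ^ m := fun m n hmn =>
    calc G (u m) (u n) (u n) ≤ ∑ i ∈ Finset.Ico m n, G (u i) (u (i + 1)) (u (i + 1)) :=
          hG.le_sum_Ico u hmn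
      _ ≤ ∑ i ∈ Finset.Ico m n, C * r ^ i := Finset.sum_le_sum fun i _ => hu i
      _ = C * ∑ i ∈ Finset.Ico m n, r ^ i := (Finset.mul_sum ..).symm
      _ ≤ C * (r ^ m / (1 - r)) :=
          mul_le_mul_of_nonneg_left (geom_sum_Ico_le_of_lt_one hr₀ hr₁) hC
      _ = C / (1 - r) * r ^ m := by ring
  have hbound : ∀ p : ℕ × ℕ,
      G (u p.1) (u p.2) (u p.2) ≤ 2 * (C / (1 - r)) * (r ^ p.1 + r ^ p.2) := by
    rintro ⟨m, n⟩
    have hm := mul_nonneg hC' (pow_nonneg hr₀ m)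
    have hn := mul_nonneg hC' (pow_nonneg hr₀ n)
    rcases le_total m n with h | h
    · linarith [hle m n h]
    · linarith [hle n m h, hG.le_two_mul (u m) (u n)]
  have hpow := tendsto_pow_atTop_nhds_zero_of_lt_one hr₀ hr₁
  have hfst : Tendsto Prod.fst (atTop : Filter (ℕ × ℕ)) atTop := by
    rw [← prod_atTop_atTop_eq]; exact tendsto_fst
  have hsnd : Tendsto Prod.snd (atTop : Filter (ℕ × ℕ)) atTop := by
    rw [← prod_atTop_atTop_eq]; exact tendsto_snd
  refine squeeze_zero (fun _ => hG.nonneg _ _ _) hbound ?_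
  simpa using ((hpow.comp hfst).add (hpow.comp hsnd)).const_mul (2 * (C / (1 - r)))

end IsGMetric

def ReichContraction {X : Type*} (G : X → X → X → ℝ) (T : X → X) (a₁ a₂ a₃ a₄ : ℝ) : Prop :=
  ∀ x y z : X, x ≠ y → x ≠ z → y ≠ z →
    G (T x) (T y) (T z) ≤
      a₁ * G x (T x) (T x) + a₂ * G y (T y) (T y) + a₃ * G z (T z) (T z) + a₄ * G x y z

def orbitPerimeter {X : Type*} (G : X → X → X → ℝ) (T : X → X) (x : X) : ℝ :=
  G x (T x) (T (T x))

section

variable {X : Type*} {G : X → X → X → ℝ} {T : X → X} {a₁ a₂ a₃ a₄ : ℝ}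

theorem orbitPerimeter_pos (hG : IsGMetric G) {x : X} (h₁ : T x ≠ x) (h₂ : T (T x) ≠ T x) :
    0 < orbitPerimeter G T x :=
  hG.pos_of_ne_of_ne h₁.symm h₂.symm

theorem le_orbitPerimeter_left (hG : IsGMetric G) (hI : ∀ x : X, T x ≠ x → T (T x) ≠ x)
    {x : X} (h₁ : T x ≠ x) : G x (T x) (T x) ≤ orbitPerimeter G T x :=
  hG.le_left (hI x h₁).symm

theorem le_orbitPerimeter_right (hG : IsGMetric G) {x : X} (h₁ : T x ≠ x) :
    G (T x) (T (T x)) (T (T x)) ≤ orbitPerimeter G T x :=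
  hG.le_right h₁.symm

theorem ReichContraction.orbitPerimeter_apply_le (hG : IsGMetric G)
    (hT : ReichContraction G T a₁ a₂ a₃ a₄) (hI : ∀ x : X, T x ≠ x → T (T x) ≠ x)
    (ha₁ : 0 ≤ a₁) (ha₂ : 0 ≤ a₂) (ha₃ : 0 ≤ a₃) (ha₃' : a₃ < 1)
    {x : X} (h₁ : T x ≠ x) (h₂ : T (T x) ≠ T x) :
    orbitPerimeter G T (T x) ≤ (a₁ + a₂ + a₄) / (1 - a₃) * orbitPerimeter G T x := by
  rw [div_mul_eq_mul_div, le_div_iff₀ (sub_pos.2 ha₃')]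
  have hReich := hT x (T x) (T (T x)) h₁.symm (hI x h₁).symm h₂.symm
  have e₁ := mul_le_mul_of_nonneg_left (le_orbitPerimeter_left hG hI h₁) ha₁
  have e₂ := mul_le_mul_of_nonneg_left (le_orbitPerimeter_right hG h₁) ha₂
  have e₃ := mul_le_mul_of_nonneg_left (le_orbitPerimeter_right hG h₂) ha₃
  unfold orbitPerimeter at *
  linarith

theorem ReichContraction.one_sub_mul_le_of_ne (hG : IsGMetric G)
    (hT : ReichContraction G T a₁ a₂ a₃ a₄) (hI : ∀ x : X, T x ≠ x → T (T x) ≠ x)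
    (ha₁ : 0 ≤ a₁) (ha₂ : 0 ≤ a₂) (ha₄ : 0 ≤ a₄)
    {x u : X} (h₁ : T x ≠ x) (h₂ : T (T x) ≠ T x) (hx : x ≠ u) (hTx : T x ≠ u) :
    (1 - a₃) * G u (T u) (T u) ≤
      2 * G (T x) u u + 2 * a₄ * G x u u + (a₁ + a₂ + a₄) * orbitPerimeter G T x := by
  have hReich := hT x (T x) u h₁.symm hx hTx
  have hu : G u (T u) (T u) ≤ 2 * G (T x) u u + G (T x) (T (T x)) (T u) :=
    calc G u (T u) (T u) ≤ G u (T x) (T x) + G (T x) (T u) (T u) := hG.triangle _ _ _ _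
      _ ≤ 2 * G (T x) u u + G (T x) (T (T x)) (T u) := by
        gcongr
        · exact hG.le_two_mul _ _
        · exact (hG.le_left h₂.symm).trans_eq (hG.swap_right _ _ _)
  have hxu : G x (T x) u ≤ 2 * G x u u + orbitPerimeter G T x :=
    calc G x (T x) u = G u x (T x) := by rw [hG.rotate, hG.rotate]
      _ ≤ G u x x + G x x (T x) := hG.triangle _ _ _ _
      _ ≤ 2 * G x u u + orbitPerimeter G T x := by
        gcongr
        · exact hG.le_two_mul _ _
        · exact hG.le_of_ne _ _ _ h₂.symm
  have e₁ := mul_le_mul_of_nonneg_left (le_orbitPerimeter_left hG hI h₁) ha₁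
  have e₂ := mul_le_mul_of_nonneg_left (le_orbitPerimeter_right hG h₁) ha₂
  have e₄ := mul_le_mul_of_nonneg_left hxu ha₄
  linarith

theorem ReichContraction.apply_eq_of_gConvergent (hG : IsGMetric G)
    (hT : ReichContraction G T a₁ a₂ a₃ a₄) (hI : ∀ x : X, T x ≠ x → T (T x) ≠ x)
    (ha₁ : 0 ≤ a₁) (ha₂ : 0 ≤ a₂) (ha₄ : 0 ≤ a₄) (ha₃ : a₃ < 1) {x₀ u : X}
    (hmove : ∀ n, T (T^[n] x₀) ≠ T^[n] x₀) (hinj : Injective fun n => T^[n] x₀)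
    (hper : Tendsto (fun n => orbitPerimeter G T (T^[n] x₀)) atTop (𝓝 0))
    (hu : GConvergent G (fun n => T^[n] x₀) u) : T u = u := by
  have hne : ∀ᶠ n in atTop, T^[n] x₀ ≠ u := by
    rw [← Nat.cofinite_eq_atTop]
    exact hinj.tendsto_cofinite.eventually (eventually_cofinite_ne u)
  have hbound : ∀ᶠ n in atTop, (1 - a₃) * G u (T u) (T u) ≤
      2 * G (T^[n + 1] x₀) u u + 2 * a₄ * G (T^[n] x₀) u u +
        (a₁ + a₂ + a₄) * orbitPerimeter G T (T^[n] x₀) := by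
    filter_upwards [hne, (tendsto_add_atTop_nat 1).eventually hne] with n hn hn'
    have h₂ := hmove (n + 1)
    rw [iterate_succ_apply'] at hn' h₂ ⊢
    exact hT.one_sub_mul_le_of_ne hG hI ha₁ ha₂ ha₄ (hmove n) h₂ hn hn'
  have hlim : Tendsto (fun n => 2 * G (T^[n + 1] x₀) u u + 2 * a₄ * G (T^[n] x₀) u u +
      (a₁ + a₂ + a₄) * orbitPerimeter G T (T^[n] x₀)) atTop (𝓝 0) := by
    have hu' : Tendsto (fun n => G (T^[n + 1] x₀) u u) atTop (𝓝 0) :=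
      hu.comp (tendsto_add_atTop_nat 1)
    simpa using ((hu'.const_mul 2).add (hu.const_mul (2 * a₄))).add (hper.const_mul _)
  have hzero : G u (T u) (T u) = 0 :=
    le_antisymm (nonpos_of_mul_nonpos_right (ge_of_tendsto hlim hbound) (sub_pos.2 ha₃))
      (hG.nonneg _ _ _)
  exact ((hG.eq_zero_iff _ _ _).1 hzero).1.symm

theorem ReichContraction.exists_fixedPoint (hG : IsGMetric G) (hcomp : GComplete G)
    (hT : ReichContraction G T a₁ a₂ a₃ a₄) (hI : ∀ x : X, T x ≠ x → T (T x) ≠ x)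
    (ha₁ : 0 ≤ a₁) (ha₂ : 0 ≤ a₂) (ha₃ : 0 ≤ a₃) (ha₄ : 0 ≤ a₄)
    (hsum : a₁ + a₂ + a₃ + a₄ < 1) (x₀ : X) : ∃ x, T x = x := by
  by_cases hfix : ∃ n, T (T^[n] x₀) = T^[n] x₀
  · obtain ⟨n, hn⟩ := hfix
    exact ⟨_, hn⟩
  push Not at hfix
  have hfix₂ (n : ℕ) : T (T (T^[n] x₀)) ≠ T (T^[n] x₀) := by
    simpa only [iterate_succ_apply'] using hfix (n + 1)
  set k := (a₁ + a₂ + a₄) / (1 - a₃)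
  have hk₀ : 0 ≤ k := div_nonneg (by linarith) (by linarith)
  have hk₁ : k < 1 := (div_lt_one (by linarith)).2 (by linarith)
  have hstep (n : ℕ) :
      orbitPerimeter G T (T^[n + 1] x₀) ≤ k * orbitPerimeter G T (T^[n] x₀) := by
    rw [iterate_succ_apply']
    exact hT.orbitPerimeter_apply_le hG hI ha₁ ha₂ ha₃ (by linarith) (hfix n) (hfix₂ n)
  have hpos (n : ℕ) : 0 < orbitPerimeter G T (T^[n] x₀) :=
    orbitPerimeter_pos hG (hfix n) (hfix₂ n)
  have hgeom (n : ℕ) : orbitPerimeter G T (T^[n] x₀) ≤ k ^ n * orbitPerimeter G T x₀ :=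
    le_geom (u := fun n => orbitPerimeter G T (T^[n] x₀)) hk₀ n fun m _ => hstep m
  have hanti : StrictAnti fun n => orbitPerimeter G T (T^[n] x₀) :=
    strictAnti_nat_of_succ_lt fun n => (hstep n).trans_lt (mul_lt_of_lt_one_left (hpos n) hk₁)
  have hinj : Injective fun n => T^[n] x₀ :=
    fun n m h => hanti.injective (congrArg (orbitPerimeter G T) h)
  have hcauchy : GCauchy G fun n => T^[n] x₀ := by
    refine hG.gCauchy_of_le_geometric (C := orbitPerimeter G T x₀) hk₀ hk₁ fun n => ?_
    rw [iterate_succ_apply', mul_comm]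
    exact (le_orbitPerimeter_left hG hI (hfix n)).trans (hgeom n)
  have hper : Tendsto (fun n => orbitPerimeter G T (T^[n] x₀)) atTop (𝓝 0) := by
    refine squeeze_zero (fun n => (hpos n).le) hgeom ?_
    simpa using (tendsto_pow_atTop_nhds_zero_of_lt_one hk₀ hk₁).mul_const _
  obtain ⟨u, hu⟩ := hcomp _ hcauchy
  exact ⟨u, hT.apply_eq_of_gConvergent hG hI ha₁ ha₂ ha₄ (by linarith) hfix hinj hper hu⟩

theorem ReichContraction.eq_or_eq_or_eq_of_fixed (hG : IsGMetric G)
    (hT : ReichContraction G T a₁ a₂ a₃ a₄) (ha₄ : a₄ < 1) {x y z : X}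
    (hx : T x = x) (hy : T y = y) (hz : T z = z) : x = y ∨ x = z ∨ y = z := by
  by_contra! hne
  obtain ⟨hxy, hxz, hyz⟩ := hne
  have hReich := hT x y z hxy hxz hyz
  simp only [hx, hy, hz, hG.self_eq_zero, mul_zero, zero_add] at hReich
  nlinarith [hG.pos_of_ne_of_ne hxy hyz]

end

theorem reich_fixedPoint_GMetric_general {X : Type*} [Nonempty X] (G : X → X → X → ℝ)
    (hG : IsGMetric G) (hcomp : GComplete G)
    (T : X → X)
    (hI : ∀ x : X, T x ≠ x → T (T x) ≠ x)
    (hII : ∃ a₁ a₂ a₃ a₄ : ℝ, 0 ≤ a₁ ∧ 0 ≤ a₂ ∧ 0 ≤ a₃ ∧ 0 ≤ a₄ ∧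
      0 < a₁ + a₂ + a₃ + a₄ ∧ a₁ + a₂ + a₃ + a₄ < 1 ∧
      ∀ x y z : X, x ≠ y → x ≠ z → y ≠ z →
        G (T x) (T y) (T z) ≤
          a₁ * G x (T x) (T x) + a₂ * G y (T y) (T y) + a₃ * G z (T z) (T z) +
            a₄ * G x y z) :
    (∃ x : X, T x = x) ∧
      ∀ x y z : X, T x = x → T y = y → T z = z → x = y ∨ x = z ∨ y = z := by
  obtain ⟨a₁, a₂, a₃, a₄, ha₁, ha₂, ha₃, ha₄, -, hsum, hT⟩ := hII
  obtain ⟨x₀⟩ := ‹Nonempty X›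
  exact ⟨ReichContraction.exists_fixedPoint hG hcomp hT hI ha₁ ha₂ ha₃ ha₄ hsum x₀,
    fun x y z => ReichContraction.eq_or_eq_or_eq_of_fixed hG hT (by linarith)⟩

/-- Reich fixed point theorem in G-metric spaces (Theorem 3.7). -/
theorem reich_fixedPoint_GMetric {X : Type*} [Nonempty X] (G : X → X → X → ℝ)
    (hG : IsGMetric G) (hcomp : GComplete G)
    (hcard : ∃ a b c : X, a ≠ b ∧ a ≠ c ∧ b ≠ c)
    (T : X → X)
    (hI : ∀ x : X, T x ≠ x → T (T x) ≠ x)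
    (hII : ∃ a₁ a₂ a₃ a₄ : ℝ, 0 ≤ a₁ ∧ 0 ≤ a₂ ∧ 0 ≤ a₃ ∧ 0 ≤ a₄ ∧
      0 < a₁ + a₂ + a₃ + a₄ ∧ a₁ + a₂ + a₃ + a₄ < 1 ∧
      ∀ x y z : X, x ≠ y → x ≠ z → y ≠ z →
        G (T x) (T y) (T z) ≤
          a₁ * G x (T x) (T x) + a₂ * G y (T y) (T y) + a₃ * G z (T z) (T z) +
            a₄ * G x y z) :
    (∃ x : X, T x = x) ∧
      ∀ x y z : X, T x = x → T y = y → T z = z → x = y ∨ x = z ∨ y = z :=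
  reich_fixedPoint_GMetric_general G hG hcomp T hI hII
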